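/- For the Bell-Szekeres-type metric ds² = 2(u+v)^{(a²-1)/2} du dv - 2(u+v)^{1-a} dx² - 2(u+v)^{1+a} dy² on {u+v>0} with a ∉ {0, 1, -1}, any vector field of the form ξ = α(u+v)∂_{(u+v)} + β(u-v)∂_{(u-v)} + γ x ∂_x + δ y ∂_y with constants α, β, γ, δ satisfying £_ξ g = c g for a constant c must have α = β = c·2/(3+a²), γ = c(1+a)²/(2(3+a²)), δ = c(1-a)²/(2(3+a²)). -/

import Mathlib

noncomputable section

/-- Points of the 4-dimensional coordinate domain. -/
abbrev Pt : Type := Fin 4 → ℝ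

/-- A (real) vector field, given by its coordinate components. -/
abbrev Vec : Type := Pt → Fin 4 → ℝ

/-- Directional derivative of a scalar along a vector field (Lie derivative of a function). -/
def dd (X : Vec) (f : Pt → ℝ) (p : Pt) : ℝ := fderiv ℝ f p (X p)

/-- Coordinate partial derivative `∂_μ`. -/
def pd (μ : Fin 4) (f : Pt → ℝ) (p : Pt) : ℝ := fderiv ℝ f p (Pi.single μ 1)

/-- Lie bracket of vector fields, `[X,Y]^i = X^ν ∂_ν Y^i - Y^ν ∂_ν X^i`. -/
def lb (X Y : Vec) : Vec := fun p i =>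
  fderiv ℝ (fun q => Y q i) p (X p) - fderiv ℝ (fun q => X q i) p (Y p)

/-- Coordinate components of the Lie derivative of a metric:
`(£_ξ g)_{μν} = ξ^σ ∂_σ g_{μν} + g_{σν} ∂_μ ξ^σ + g_{μσ} ∂_ν ξ^σ`. -/
def lieDg (ξ : Vec) (g : Pt → Fin 4 → Fin 4 → ℝ) (p : Pt) (μ ν : Fin 4) : ℝ :=
  (∑ σ : Fin 4, ξ p σ * pd σ (fun q => g q μ ν) p)
  + (∑ σ : Fin 4, g p σ ν * pd μ (fun q => ξ q σ) p)
  + (∑ σ : Fin 4, g p μ σ * pd ν (fun q => ξ q σ) p)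

/-- Pointwise value `g(X,Y)` of the metric on two vector fields. -/
def gVal (g : Pt → Fin 4 → Fin 4 → ℝ) (X Y : Vec) (p : Pt) : ℝ :=
  ∑ i : Fin 4, ∑ j : Fin 4, g p i j * X p i * Y p j

/-- The Bell–Szekeres-type metric in coordinates (u,v,x,y) = (p 0, p 1, p 2, p 3):
`ds² = 2(u+v)^{(a²-1)/2} du dv - 2(u+v)^{1-a} dx² - 2(u+v)^{1+a} dy²`. -/
def bsMetric (a : ℝ) : Pt → Fin 4 → Fin 4 → ℝ := fun p =>
  ![![0, (p 0 + p 1) ^ ((a ^ 2 - 1) / 2), 0, 0],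
    ![(p 0 + p 1) ^ ((a ^ 2 - 1) / 2), 0, 0, 0],
    ![0, 0, -2 * (p 0 + p 1) ^ (1 - a), 0],
    ![0, 0, 0, -2 * (p 0 + p 1) ^ (1 + a)]]

-- helpers
def pZ : Pt := ![1, 0, 0, 0]

lemma hbase : HasFDerivAt (fun q : Pt => q 0 + q 1)
    ((ContinuousLinearMap.proj 0 : Pt →L[ℝ] ℝ) + ContinuousLinearMap.proj 1) pZ :=
  ((ContinuousLinearMap.proj 0 : Pt →L[ℝ] ℝ).hasFDerivAt).add
    ((ContinuousLinearMap.proj 1 : Pt →L[ℝ] ℝ).hasFDerivAt)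

lemma hpow (e : ℝ) : HasFDerivAt (fun q : Pt => (q 0 + q 1) ^ e)
    (e • ((ContinuousLinearMap.proj 0 : Pt →L[ℝ] ℝ) + ContinuousLinearMap.proj 1)) pZ := by
  have h1 : HasDerivAt (fun x : ℝ => x ^ e) (e * (1:ℝ) ^ (e - 1)) ((fun q : Pt => q 0 + q 1) pZ) := by
    have h : (fun q : Pt => q 0 + q 1) pZ = 1 := by simp [pZ]
    rw [h]
    exact Real.hasDerivAt_rpow_const (Or.inl one_ne_zero)
  have h2 := h1.comp_hasFDerivAt pZ hbase
  simpa [Function.comp_def] using h2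

lemma pd_rpow (e : ℝ) (σ : Fin 4) : pd σ (fun q : Pt => (q 0 + q 1) ^ e) pZ
    = e * ((Pi.single σ (1:ℝ) : Pt) 0 + (Pi.single σ (1:ℝ) : Pt) 1) := by
  rw [pd, (hpow e).fderiv]; simp; ring

lemma pd_g2 (e : ℝ) (σ : Fin 4) : pd σ (fun q : Pt => -2 * (q 0 + q 1) ^ e) pZ
    = -2 * (e * ((Pi.single σ (1:ℝ) : Pt) 0 + (Pi.single σ (1:ℝ) : Pt) 1)) := by
  rw [pd, ((hpow e).const_mul (-2)).fderiv]; simp; ring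

lemma pdc (f : Pt → ℝ) (L : Pt →L[ℝ] ℝ) (hf : f = ⇑L) (μ : Fin 4) (p : Pt) :
    pd μ f p = L (Pi.single μ 1) := by
  rw [pd, hf, L.fderiv]

lemma pd_xi0 (α β : ℝ) (μ : Fin 4) (p : Pt) :
    pd μ (fun q : Pt => (α * (q 0 + q 1) + β * (q 0 - q 1)) / 2) p
    = (α + β) / 2 * (Pi.single μ (1:ℝ) : Pt) 0 + (α - β) / 2 * (Pi.single μ (1:ℝ) : Pt) 1 := by
  rw [pdc _ (((α + β)/2) • (ContinuousLinearMap.proj 0 : Pt →L[ℝ] ℝ)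
      + ((α - β)/2) • (ContinuousLinearMap.proj 1 : Pt →L[ℝ] ℝ))]
  · simp
  · funext q; simp; ring

lemma pd_xi1 (α β : ℝ) (μ : Fin 4) (p : Pt) :
    pd μ (fun q : Pt => (α * (q 0 + q 1) - β * (q 0 - q 1)) / 2) p
    = (α - β) / 2 * (Pi.single μ (1:ℝ) : Pt) 0 + (α + β) / 2 * (Pi.single μ (1:ℝ) : Pt) 1 := by
  rw [pdc _ (((α - β)/2) • (ContinuousLinearMap.proj 0 : Pt →L[ℝ] ℝ)
      + ((α + β)/2) • (ContinuousLinearMap.proj 1 : Pt →L[ℝ] ℝ))]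
  · simp
  · funext q; simp; ring

lemma pd_xi2 (γ : ℝ) (i : Fin 4) (μ : Fin 4) (p : Pt) :
    pd μ (fun q : Pt => γ * q i) p = γ * (Pi.single μ (1:ℝ) : Pt) i := by
  rw [pdc _ (γ • (ContinuousLinearMap.proj i : Pt →L[ℝ] ℝ))]
  · simp
  · funext q; simp

lemma pd_zero (μ : Fin 4) (p : Pt) : pd μ (fun _ : Pt => (0:ℝ)) p = 0 := by
  simp [pd]

/-- for the Bell–Szekeres-type metric with a ∉ {0,1,-1}, any vector field
`ξ = α(u+v)∂_{(u+v)} + β(u-v)∂_{(u-v)} + γ x ∂_x + δ y ∂_y` (with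
∂_{(u±v)} = (1/2)(∂_u ± ∂_v)) satisfying £_ξ g = c g for a constant c must have
α = 2c/(3+a²), β = 2c/(3+a²), γ = c(1+a)²/(2(3+a²)), δ = c(1-a)²/(2(3+a²)). -/
theorem bell_szekeres_homothety_unique (a c α β γ δ : ℝ)
    (ha0 : a ≠ 0) (ha1 : a ≠ 1) (ha2 : a ≠ -1)
    (h : ∀ p : Pt, 0 < p 0 + p 1 → ∀ μ ν : Fin 4,
      lieDg (fun p => ![(α * (p 0 + p 1) + β * (p 0 - p 1)) / 2,
                        (α * (p 0 + p 1) - β * (p 0 - p 1)) / 2,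
                        γ * p 2, δ * p 3]) (bsMetric a) p μ ν
        = c * bsMetric a p μ ν) :
    α = 2 * c / (3 + a ^ 2) ∧ β = 2 * c / (3 + a ^ 2) ∧
      γ = c * (1 + a) ^ 2 / (2 * (3 + a ^ 2)) ∧
      δ = c * (1 - a) ^ 2 / (2 * (3 + a ^ 2)) := by
  have hpos : (0:ℝ) < pZ 0 + pZ 1 := by norm_num [pZ]
  have e00 := h pZ hpos 0 0
  have e01 := h pZ hpos 0 1
  have e22 := h pZ hpos 2 2
  have e33 := h pZ hpos 3 3
  simp only [lieDg, Fin.sum_univ_four, bsMetric, Matrix.cons_val_zero, Matrix.cons_val_one,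
    Matrix.head_cons, Matrix.cons_val_two, Matrix.tail_cons, Matrix.cons_val_three,
    pd_rpow, pd_g2, pd_xi0, pd_xi1, pd_xi2, pd_zero] at e00 e01 e22 e33
  norm_num [pZ, Pi.single_apply, Real.one_rpow, Matrix.cons_val, Fin.ext_iff] at e00 e01 e22 e33
  have hab : α = β := by linarith
  have h3 : (0:ℝ) < 3 + a ^ 2 := by positivity
  have hA : α * (3 + a ^ 2) = 2 * c := by linear_combination 2 * e01 + 2 * hab
  refine ⟨?_, ?_, ?_, ?_⟩
  · rw [eq_div_iff (ne_of_gt h3)]; linarith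
  · rw [eq_div_iff (ne_of_gt h3)]; nlinarith [hA, hab]
  · rw [eq_div_iff (by positivity : (2 * (3 + a ^ 2)) ≠ 0)]
    linear_combination (-(3 + a ^ 2) / 2) * e22 + (a - 1) * hA
  · rw [eq_div_iff (by positivity : (2 * (3 + a ^ 2)) ≠ 0)]
    linear_combination (-(3 + a ^ 2) / 2) * e33 + (-(1 + a)) * hA
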